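/- Let μ be the 2π-periodic measure (1 + cos x) dx on ℝ, with trigonometric moments γ₀ = 1, γ_{±1} = 1/2, γ_k = 0 for |k| ≥ 2, and let Γ_n be its n×n Toeplitz moment matrices. Then Σ[Γ₁⁻¹] = 1, Σ[Γ₂⁻¹] = 4/3, and more generally the first differences h_n = Σ[Γ_{n+1}⁻¹] − Σ[Γ_n⁻¹] satisfy h_{2n} = (n+1)/(2n+1) and h_{2n+1} = (n+1)/(2n+3) for all n ≥ 0. -/

import Mathlib

/-!
`Γ_n` acts on vectors supported in `[0, n)` as the convolution `f ↦ f(· - 1)/2 + f + f(· + 1)/2`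
on `ℤ`, whose null solutions are `(-1)^j (a + b j)`. Gluing the null solutions that vanish at `-1`
and at `n` gives an explicit Green's function, so `Γ_n` is invertible, and `Σ[Γ_n⁻¹]` is the sum of
the solution of `Γ_n x = 1`. That solution is `x_j = 1/2 + (-1)^j (a + b j)` with `a, b` fixed by
`x_{-1} = x_n = 0`, and its sum over `[0, n)` is an alternating sum with a closed form for `n` odd
and for `n` even.
-/

open Matrix

noncomputable section

/-- Trigonometric moments of the measure `(1 + cos x) dx`:
`γ₀ = 1`, `γ_{±1} = 1/2`, `γ_k = 0` for `|k| ≥ 2`. -/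
def gammaCos : ℤ → ℝ := fun k => if k = 0 then 1 else if k = 1 ∨ k = -1 then 1 / 2 else 0

/-- The `n×n` Toeplitz moment matrix `Γ_n = (γ_{j−k})` of `(1 + cos x) dx`. -/
def GammaCos (n : ℕ) : Matrix (Fin n) (Fin n) ℝ :=
  fun j k => gammaCos ((j : ℤ) - (k : ℤ))

/-- `Σ[Γ_n⁻¹]`, the sum of all entries of the inverse moment matrix. -/
def SigmaCos (n : ℕ) : ℝ := ∑ i : Fin n, ∑ j : Fin n, (GammaCos n)⁻¹ i j

open Finset

theorem Matrix.sum_sum_inv_apply_eq_sum_of_mulVec_eq_one {ι R : Type*} [Fintype ι] [DecidableEq ι]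
    [CommRing R] {A : Matrix ι ι R} (hA : IsUnit A.det) {x : ι → R} (hx : A *ᵥ x = 1) :
    ∑ i, ∑ j, A⁻¹ i j = ∑ i, x i := by
  have hinv : A⁻¹ *ᵥ 1 = x := by rw [← hx, mulVec_mulVec, nonsing_inv_mul A hA, one_mulVec]
  simp only [← hinv, mulVec, dotProduct, Pi.one_apply, mul_one]

theorem Fin.sum_ite_intCast_eq {M : Type*} [AddCommMonoid M] {n : ℕ} (c : ℤ) (a : M)
    (h : (0 ≤ c ∧ c < n) ∨ a = 0) :
    ∑ j : Fin n, (if (j : ℤ) = c then a else 0) = a := by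
  rcases h with ⟨hc0, hcn⟩ | rfl
  · lift c to ℕ using hc0
    have hc : c < n := by exact_mod_cast hcn
    have hiff : ∀ j : Fin n, ((j : ℤ) = c ↔ j = ⟨c, hc⟩) := fun j => by simp [Fin.ext_iff]
    simp only [hiff, sum_ite_eq', mem_univ, if_true]
  · simp

/-- `(γ ⋆ f)(i) = ∑ₖ γₖ f(i - k)`: the bi-infinite Toeplitz operator of `γ`. -/
def gammaCosConv (f : ℤ → ℝ) (i : ℤ) : ℝ := f (i - 1) / 2 + f i + f (i + 1) / 2

lemma gammaCos_sub_mul (f : ℤ → ℝ) (i j : ℤ) :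
    gammaCos (i - j) * f j = (if j = i - 1 then f (i - 1) / 2 else 0) + (if j = i then f i else 0)
      + (if j = i + 1 then f (i + 1) / 2 else 0) := by
  unfold gammaCos
  split_ifs <;> first | omega | (subst_vars; ring)

lemma GammaCos_mulVec {n : ℕ} {f : ℤ → ℝ} (h0 : f (-1) = 0) (hn : f n = 0) :
    GammaCos n *ᵥ (fun j : Fin n => f j) = fun i : Fin n => gammaCosConv f i := by
  ext i
  have hi : (i : ℤ) < n := by exact_mod_cast i.isLt
  simp only [mulVec, dotProduct, GammaCos, gammaCos_sub_mul, sum_add_distrib]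
  rw [Fin.sum_ite_intCast_eq, Fin.sum_ite_intCast_eq, Fin.sum_ite_intCast_eq, gammaCosConv]
  · by_cases h : (i : ℤ) + 1 = n
    · exact .inr (by rw [h, hn, zero_div])
    · exact .inl (by omega)
  · exact .inl (by omega)
  · by_cases h : (i : ℤ) = 0
    · exact .inr (by rw [h, zero_sub, h0, zero_div])
    · exact .inl (by omega)

def altAffine (a b : ℝ) (j : ℤ) : ℝ := (-1) ^ j * (a + b * j)

lemma gammaCosConv_altAffine (a b : ℝ) (i : ℤ) : gammaCosConv (altAffine a b) i = 0 := by
  have h : (-1 : ℝ) ≠ 0 := by norm_num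
  simp only [gammaCosConv, altAffine, zpow_sub_one₀ h, zpow_add_one₀ h]
  push_cast
  ring

lemma altAffine_of_even {j : ℤ} (hj : Even j) (a b : ℝ) : altAffine a b j = a + b * j := by
  rw [altAffine, hj.neg_one_zpow, one_mul]

lemma altAffine_of_odd {j : ℤ} (hj : Odd j) (a b : ℝ) : altAffine a b j = -(a + b * j) := by
  rw [altAffine, hj.neg_one_zpow, neg_one_mul]

lemma altAffine_neg_one (a b : ℝ) : altAffine a b (-1) = b - a := by
  simp only [altAffine, _root_.zpow_neg_one, Int.cast_neg, Int.cast_one]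
  ring

lemma altAffine_casoratian (n : ℕ) (k : ℤ) :
    altAffine 1 1 k * altAffine n (-1) (k + 1) - altAffine 1 1 (k + 1) * altAffine n (-1) k
      = n + 1 := by
  have hsq : ((-1 : ℝ) ^ k) * (-1) ^ k = 1 := by rw [← mul_zpow]; norm_num
  simp only [altAffine, zpow_add_one₀ (by norm_num : (-1 : ℝ) ≠ 0)]
  push_cast
  linear_combination ((n:ℝ) + 1) * hsq

/-- Green's function of `γ ⋆ ·` with zero boundary values at `-1` and `n`, glued from the null
solutions `altAffine 1 1` (vanishing at `-1`) and `altAffine n (-1)` (vanishing at `n`); the factor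
`2 / (n + 1)` normalises by their Casoratian. -/
def gammaCosGreen (n : ℕ) (k j : ℤ) : ℝ :=
  2 / (n + 1) * altAffine 1 1 (min j k) * altAffine n (-1) (max j k)

lemma gammaCosConv_gammaCosGreen (n : ℕ) (k i : ℤ) :
    gammaCosConv (gammaCosGreen n k) i = if i = k then 1 else 0 := by
  have hu := gammaCosConv_altAffine 1 1 i
  have hv := gammaCosConv_altAffine n (-1) i
  rw [gammaCosConv] at hu hv
  rcases lt_trichotomy i k with hik | rfl | hik
  · simp only [gammaCosConv, gammaCosGreen, min_eq_left (by omega : i - 1 ≤ k),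
      min_eq_left hik.le, min_eq_left (by omega : i + 1 ≤ k), max_eq_right (by omega : i - 1 ≤ k),
      max_eq_right hik.le, max_eq_right (by omega : i + 1 ≤ k), if_neg hik.ne]
    linear_combination (2 / (n + 1) * altAffine n (-1) k) * hu
  · simp only [gammaCosConv, gammaCosGreen, min_eq_left (by omega : i - 1 ≤ i), min_self,
      min_eq_right (by omega : i ≤ i + 1), max_eq_right (by omega : i - 1 ≤ i), max_self,
      max_eq_left (by omega : i ≤ i + 1), if_true]
    field_simp
    linear_combination 2 * altAffine n (-1) i * hu + altAffine_casoratian n i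
  · simp only [gammaCosConv, gammaCosGreen, min_eq_right (by omega : k ≤ i - 1),
      min_eq_right hik.le, min_eq_right (by omega : k ≤ i + 1), max_eq_left (by omega : k ≤ i - 1),
      max_eq_left hik.le, max_eq_left (by omega : k ≤ i + 1), if_neg hik.ne']
    linear_combination (2 / (n + 1) * altAffine 1 1 k) * hv

lemma isUnit_det_GammaCos (n : ℕ) : IsUnit (GammaCos n).det := by
  refine isUnit_det_of_right_inverse (B := of fun j k => gammaCosGreen n k j) ?_
  ext i k
  have hcol := congrFun (GammaCos_mulVec (f := gammaCosGreen n k) ?_ ?_) i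
  · simp only [mulVec, dotProduct, gammaCosConv_gammaCosGreen] at hcol
    simpa [mul_apply, one_apply, Fin.ext_iff] using hcol
  · simp [gammaCosGreen, altAffine]
  · simp [gammaCosGreen, altAffine]

lemma sum_range_two_mul_altAffine (a b : ℝ) (m : ℕ) :
    ∑ i ∈ range (2 * m), altAffine a b i = -(m * b) := by
  induction m with
  | zero => simp
  | succ m ih =>
    rw [show 2 * (m + 1) = 2 * m + 1 + 1 by ring, sum_range_succ, sum_range_succ, ih,
      altAffine_of_even (by simp), altAffine_of_odd (by simp)]
    push_cast
    ring

lemma SigmaCos_eq_sum_altAffine {n : ℕ} {a b : ℝ} (hab : a - b = 1 / 2)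
    (hn : 1 / 2 + altAffine a b n = 0) :
    SigmaCos n = ∑ i ∈ range n, (1 / 2 + altAffine a b i) := by
  have hx : GammaCos n *ᵥ (fun j : Fin n => 1 / 2 + altAffine a b j) = 1 := by
    rw [GammaCos_mulVec (f := fun j => 1 / 2 + altAffine a b j) ?_ hn]
    · ext i
      have h := gammaCosConv_altAffine a b i
      simp only [gammaCosConv, Pi.one_apply] at h ⊢
      linarith
    · rw [altAffine_neg_one]
      linarith
  rw [SigmaCos, sum_sum_inv_apply_eq_sum_of_mulVec_eq_one (isUnit_det_GammaCos n) hx]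
  exact Fin.sum_univ_eq_sum_range (fun i : ℕ => 1 / 2 + altAffine a b i) n

lemma SigmaCos_two_mul_add_one (m : ℕ) : SigmaCos (2 * m + 1) = m + 1 := by
  rw [SigmaCos_eq_sum_altAffine (a := 1 / 2) (b := 0) (by norm_num) ?_, sum_range_succ,
    sum_add_distrib, sum_range_two_mul_altAffine]
  · rw [altAffine_of_even (by simp), sum_const, card_range, nsmul_eq_mul]
    push_cast
    ring
  · rw [altAffine_of_odd (by simp)]
    ring

lemma SigmaCos_two_mul (m : ℕ) : SigmaCos (2 * m) = m + m / (2 * m + 1) := by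
  have h : (2 * m + 1 : ℝ) ≠ 0 := by positivity
  rw [SigmaCos_eq_sum_altAffine (a := 1 / 2 - 1 / (2 * m + 1)) (b := -1 / (2 * m + 1)) (by ring) ?_,
    sum_add_distrib, sum_range_two_mul_altAffine]
  · rw [sum_const, card_range, nsmul_eq_mul]
    push_cast
    field_simp
  · rw [altAffine_of_even (by simp)]
    push_cast
    field_simp
    ring

/-- for `μ = (1 + cos x)dx`, `Σ[Γ₁⁻¹] = 1`, `Σ[Γ₂⁻¹] = 4/3`, and
the first differences `h_n = Σ[Γ_{n+1}⁻¹] − Σ[Γ_n⁻¹]` satisfy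
`h_{2n} = (n+1)/(2n+1)` and `h_{2n+1} = (n+1)/(2n+3)`. -/
theorem stmt19 :
    SigmaCos 1 = 1 ∧ SigmaCos 2 = 4 / 3 ∧
    ∀ n : ℕ,
      SigmaCos (2 * n + 1) - SigmaCos (2 * n) = (n + 1) / (2 * n + 1) ∧
      SigmaCos (2 * n + 2) - SigmaCos (2 * n + 1) = (n + 1) / (2 * n + 3) := by
  refine ⟨by simpa using SigmaCos_two_mul_add_one 0, by norm_num [SigmaCos_two_mul 1],
    fun n => ⟨?_, ?_⟩⟩
  · rw [SigmaCos_two_mul_add_one, SigmaCos_two_mul]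
    field_simp
    ring
  · rw [show 2 * n + 2 = 2 * (n + 1) by ring, SigmaCos_two_mul, SigmaCos_two_mul_add_one]
    push_cast
    field_simp
    ring

end
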